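/- Let q ∈ ℂ, q ≠ 0, and let R = ℂ[t, Q, Q^{−1}] with Qt = qtQ and 𝔥_q = ℂ⟨u, u^{±1}, v⟩ with uv = qvu. The map Φ: R ⊗_ℂ R → R ⊗_ℂ 𝔥_q determined by Φ(a ⊗ b) = (a ⊗ 1)·ρ(b), where ρ(t) = t⊗1 + Q⊗v, ρ(Q) = Q⊗u, is a bijection; i.e., R is an 𝔥_q-Galois extension of ℂ (the coaction makes R a quantum torsor). -/

import Mathlib

/-!
The canonical map `can : a ⊗ b ↦ (a ⊗ 1) ρ(b)` is left `R`-linear, so it is inverted by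
`a ⊗ h ↦ (a ⊗ 1) τ(h)` once one has a translation map `τ(h) = can⁻¹ (1 ⊗ h)`. We take `τ` to be an
algebra map `𝔥_q → Rᵐᵒᵖ ⊗ R` (read in `R ⊗ R` by forgetting the `op`). The `op` makes both
`can (τ h) = 1 ⊗ h` and `can⁻¹ (ρ a) = 1 ⊗ a` stable under products, so they only have to be
checked on the generators `u, u⁻¹, v` of `𝔥_q` and `t, Q, Q⁻¹` of `R`, where they are one-line
computations.
-/

/-- Generators of the algebra `R = ℂ⟨t, Q, Q⁻¹⟩`. -/
inductive Rgen | t | Q | Qinv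

open FreeAlgebra in
/-- Defining relations of `R`: `Q·t = q·t·Q` and `Q·Q⁻¹ = Q⁻¹·Q = 1`. -/
inductive Rrel (q : ℂ) : FreeAlgebra ℂ Rgen → FreeAlgebra ℂ Rgen → Prop
  | comm : Rrel q (ι ℂ Rgen.Q * ι ℂ Rgen.t) (q • (ι ℂ Rgen.t * ι ℂ Rgen.Q))
  | inv_right : Rrel q (ι ℂ Rgen.Q * ι ℂ Rgen.Qinv) 1
  | inv_left : Rrel q (ι ℂ Rgen.Qinv * ι ℂ Rgen.Q) 1

/-- The ℂ-algebra `R = ℂ[t, Q, Q⁻¹]` with relation `Qt = qtQ`. -/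
abbrev Ralg (q : ℂ) : Type := RingQuot (Rrel q)

noncomputable def Ralg.t (q : ℂ) : Ralg q :=
  RingQuot.mkAlgHom ℂ (Rrel q) (FreeAlgebra.ι ℂ Rgen.t)
noncomputable def Ralg.Q (q : ℂ) : Ralg q :=
  RingQuot.mkAlgHom ℂ (Rrel q) (FreeAlgebra.ι ℂ Rgen.Q)
noncomputable def Ralg.Qinv (q : ℂ) : Ralg q :=
  RingQuot.mkAlgHom ℂ (Rrel q) (FreeAlgebra.ι ℂ Rgen.Qinv)


/-- Generators of the algebra `𝔥_q = ℂ⟨u, u⁻¹, v⟩`. -/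
inductive Hgen | u | uinv | v

open FreeAlgebra in
/-- Defining relations of `𝔥_q`: `u·v = q·v·u` and `u·u⁻¹ = u⁻¹·u = 1`. -/
inductive Hrel (q : ℂ) : FreeAlgebra ℂ Hgen → FreeAlgebra ℂ Hgen → Prop
  | comm : Hrel q (ι ℂ Hgen.u * ι ℂ Hgen.v) (q • (ι ℂ Hgen.v * ι ℂ Hgen.u))
  | inv_right : Hrel q (ι ℂ Hgen.u * ι ℂ Hgen.uinv) 1
  | inv_left : Hrel q (ι ℂ Hgen.uinv * ι ℂ Hgen.u) 1

/-- The ℂ-algebra `𝔥_q = ℂ⟨u, u⁻¹, v⟩` with relation `uv = qvu`. -/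
abbrev Hq (q : ℂ) : Type := RingQuot (Hrel q)

noncomputable def Hq.u (q : ℂ) : Hq q :=
  RingQuot.mkAlgHom ℂ (Hrel q) (FreeAlgebra.ι ℂ Hgen.u)
noncomputable def Hq.uinv (q : ℂ) : Hq q :=
  RingQuot.mkAlgHom ℂ (Hrel q) (FreeAlgebra.ι ℂ Hgen.uinv)
noncomputable def Hq.v (q : ℂ) : Hq q :=
  RingQuot.mkAlgHom ℂ (Hrel q) (FreeAlgebra.ι ℂ Hgen.v)

open TensorProduct MulOpposite

namespace HopfGalois

variable {R A H : Type*} [CommSemiring R] [Semiring A] [Algebra R A] [Semiring H] [Algebra R H]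

def can (ρ : A →ₐ[R] A ⊗[R] H) : A ⊗[R] A →ₗ[R] A ⊗[R] H :=
  LinearMap.mul' R (A ⊗[R] H) ∘ₗ
    map (Algebra.TensorProduct.includeLeft : A →ₐ[R] A ⊗[R] H).toLinearMap ρ.toLinearMap

@[simp]
lemma can_tmul (ρ : A →ₐ[R] A ⊗[R] H) (a b : A) : can ρ (a ⊗ₜ b) = (a ⊗ₜ 1) * ρ b := rfl

lemma can_tmul_one_mul (ρ : A →ₐ[R] A ⊗[R] H) (a : A) (W : A ⊗[R] A) :
    can ρ ((a ⊗ₜ 1) * W) = (a ⊗ₜ 1) * can ρ W := by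
  induction W using TensorProduct.induction_on with
  | zero => simp
  | tmul b c => simp only [Algebra.TensorProduct.tmul_mul_tmul, one_mul, can_tmul, ← mul_assoc]
  | add x y hx hy => simp only [mul_add, map_add, hx, hy]

variable (R) in
def unopLeft : Aᵐᵒᵖ ⊗[R] A →ₗ[R] A ⊗[R] A :=
  map (opLinearEquiv R).symm.toLinearMap LinearMap.id

@[simp]
lemma unopLeft_tmul (x : Aᵐᵒᵖ) (y : A) : unopLeft R (x ⊗ₜ y) = unop x ⊗ₜ y := rfl

@[simp]
lemma unopLeft_one : unopLeft R (1 : Aᵐᵒᵖ ⊗[R] A) = 1 := rfl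

variable (R) in
def bimoduleAct : Aᵐᵒᵖ ⊗[R] A →ₗ[R] Module.End R (A ⊗[R] A) :=
  map₂ ((LinearMap.mul R A).flip ∘ₗ (opLinearEquiv R).symm.toLinearMap) (LinearMap.mul R A)

@[simp]
lemma bimoduleAct_tmul_tmul (x : Aᵐᵒᵖ) (y a b : A) :
    bimoduleAct R (x ⊗ₜ y) (a ⊗ₜ b) = (a * unop x) ⊗ₜ (y * b) := rfl

lemma unopLeft_mul (X Y : Aᵐᵒᵖ ⊗[R] A) : unopLeft R (X * Y) = bimoduleAct R X (unopLeft R Y) := by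
  induction X using TensorProduct.induction_on with
  | zero => simp
  | tmul x y =>
    induction Y using TensorProduct.induction_on with
    | zero => simp
    | tmul x' y' =>
      simp only [Algebra.TensorProduct.tmul_mul_tmul, unopLeft_tmul, unop_mul,
        bimoduleAct_tmul_tmul]
    | add Y Y' hY hY' => simp only [mul_add, map_add, hY, hY']
  | add X X' hX hX' => simp only [add_mul, map_add, LinearMap.add_apply, hX, hX']

lemma bimoduleAct_tmul_one_mul (X : Aᵐᵒᵖ ⊗[R] A) (c : A) (W : A ⊗[R] A) :
    bimoduleAct R X ((c ⊗ₜ 1) * W) = (c ⊗ₜ 1) * bimoduleAct R X W := by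
  induction X using TensorProduct.induction_on with
  | zero => simp
  | tmul x y =>
    induction W using TensorProduct.induction_on with
    | zero => simp
    | tmul a b =>
      simp only [Algebra.TensorProduct.tmul_mul_tmul, one_mul, bimoduleAct_tmul_tmul, mul_assoc]
    | add W W' hW hW' => simp only [mul_add, map_add, hW, hW']
  | add X X' hX hX' => simp only [map_add, LinearMap.add_apply, mul_add, hX, hX']

lemma bimoduleAct_one_tmul (X : Aᵐᵒᵖ ⊗[R] A) (b : A) :
    bimoduleAct R X (1 ⊗ₜ b) = unopLeft R X * (1 ⊗ₜ b) := by
  induction X using TensorProduct.induction_on with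
  | zero => simp
  | tmul x y =>
    simp only [bimoduleAct_tmul_tmul, one_mul, unopLeft_tmul, Algebra.TensorProduct.tmul_mul_tmul,
      mul_one]
  | add X X' hX hX' => simp only [map_add, LinearMap.add_apply, add_mul, hX, hX']

section can

variable (ρ : A →ₐ[R] A ⊗[R] H)

lemma can_unopLeft_mul_tmul (X : Aᵐᵒᵖ ⊗[R] A) (x y : A) :
    can ρ (unopLeft R (X * (op x ⊗ₜ y))) = (x ⊗ₜ 1) * can ρ (unopLeft R X) * ρ y := by
  induction X using TensorProduct.induction_on with
  | zero => simp
  | tmul x' y' =>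
    simp only [Algebra.TensorProduct.tmul_mul_tmul, unopLeft_tmul, unop_mul, unop_op, can_tmul,
      map_mul, ← mul_assoc, mul_one]
  | add X X' hX hX' => simp only [add_mul, map_add, hX, hX', mul_add]

lemma can_unopLeft_mul {X : Aᵐᵒᵖ ⊗[R] A} {h : H} (hX : can ρ (unopLeft R X) = 1 ⊗ₜ h)
    (Y : Aᵐᵒᵖ ⊗[R] A) : can ρ (unopLeft R (X * Y)) = (1 ⊗ₜ h) * can ρ (unopLeft R Y) := by
  induction Y using TensorProduct.induction_on with
  | zero => simp
  | tmul x y =>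
    rw [← op_unop x, can_unopLeft_mul_tmul, hX, unopLeft_tmul, can_tmul, unop_op, ← mul_assoc,
      Algebra.TensorProduct.tmul_mul_tmul, Algebra.TensorProduct.tmul_mul_tmul,
      mul_one, one_mul, mul_one, one_mul]
  | add Y Y' hY hY' => simp only [mul_add, map_add, hY, hY']

variable {ρ} {γ : H →ₐ[R] Aᵐᵒᵖ ⊗[R] A}

lemma can_unopLeft_of_adjoin_eq_top {s : Set H} (hs : Algebra.adjoin R s = ⊤)
    (hγ : ∀ h ∈ s, can ρ (unopLeft R (γ h)) = 1 ⊗ₜ h) (h : H) :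
    can ρ (unopLeft R (γ h)) = 1 ⊗ₜ h := by
  induction (hs ▸ Algebra.mem_top : h ∈ Algebra.adjoin R s) using Algebra.adjoin_induction with
  | mem h hh => exact hγ h hh
  | algebraMap r =>
    rw [AlgHom.commutes, Algebra.algebraMap_eq_smul_one, map_smul, map_smul, unopLeft_one,
      Algebra.TensorProduct.one_def, can_tmul, map_one, mul_one, Algebra.algebraMap_eq_smul_one,
      tmul_smul]
  | add h k _ _ hh hk => rw [map_add, map_add, map_add, hh, hk, tmul_add]
  | mul h k _ _ hh hk =>
    rw [map_mul, can_unopLeft_mul ρ hh, hk, Algebra.TensorProduct.tmul_mul_tmul, one_mul]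

end can

def canInv (γ : H →ₐ[R] Aᵐᵒᵖ ⊗[R] A) : A ⊗[R] H →ₗ[R] A ⊗[R] A :=
  LinearMap.mul' R (A ⊗[R] A) ∘ₗ
    map (Algebra.TensorProduct.includeLeft : A →ₐ[R] A ⊗[R] A).toLinearMap
      (unopLeft R ∘ₗ γ.toLinearMap)

section canInv

variable (γ : H →ₐ[R] Aᵐᵒᵖ ⊗[R] A)

@[simp]
lemma canInv_tmul (a : A) (h : H) : canInv γ (a ⊗ₜ h) = (a ⊗ₜ 1) * unopLeft R (γ h) := rfl

lemma canInv_tmul_one_mul (a : A) (Z : A ⊗[R] H) :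
    canInv γ ((a ⊗ₜ 1) * Z) = (a ⊗ₜ 1) * canInv γ Z := by
  induction Z using TensorProduct.induction_on with
  | zero => simp
  | tmul b h => simp only [Algebra.TensorProduct.tmul_mul_tmul, one_mul, canInv_tmul, ← mul_assoc]
  | add x y hx hy => simp only [mul_add, map_add, hx, hy]

lemma canInv_tmul_mul (a : A) (h : H) (Z : A ⊗[R] H) :
    canInv γ ((a ⊗ₜ h) * Z) = (a ⊗ₜ 1) * bimoduleAct R (γ h) (canInv γ Z) := by
  induction Z using TensorProduct.induction_on with
  | zero => simp
  | tmul c k =>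
    rw [Algebra.TensorProduct.tmul_mul_tmul, canInv_tmul, canInv_tmul, map_mul, unopLeft_mul,
      bimoduleAct_tmul_one_mul, ← mul_assoc, Algebra.TensorProduct.tmul_mul_tmul, mul_one]
  | add x y hx hy => simp only [mul_add, map_add, hx, hy]

lemma canInv_mul {Z : A ⊗[R] H} {b : A} (hZ : canInv γ Z = 1 ⊗ₜ b) (Y : A ⊗[R] H) :
    canInv γ (Y * Z) = canInv γ Y * (1 ⊗ₜ b) := by
  induction Y using TensorProduct.induction_on with
  | zero => simp
  | tmul a h => rw [canInv_tmul_mul, hZ, bimoduleAct_one_tmul, canInv_tmul, mul_assoc]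
  | add x y hx hy => simp only [add_mul, map_add, hx, hy]

variable {γ} {ρ : A →ₐ[R] A ⊗[R] H}

lemma canInv_of_adjoin_eq_top {t : Set A} (ht : Algebra.adjoin R t = ⊤)
    (hρ : ∀ a ∈ t, canInv γ (ρ a) = 1 ⊗ₜ a) (a : A) : canInv γ (ρ a) = 1 ⊗ₜ a := by
  induction (ht ▸ Algebra.mem_top : a ∈ Algebra.adjoin R t) using Algebra.adjoin_induction with
  | mem a ha => exact hρ a ha
  | algebraMap r =>
    rw [AlgHom.commutes, Algebra.algebraMap_eq_smul_one, map_smul, Algebra.TensorProduct.one_def,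
      canInv_tmul, map_one, unopLeft_one, mul_one, Algebra.algebraMap_eq_smul_one,
      tmul_smul]
  | add a b _ _ ha hb => rw [map_add, map_add, ha, hb, tmul_add]
  | mul a b _ _ ha hb =>
    rw [map_mul, canInv_mul γ hb, ha, Algebra.TensorProduct.tmul_mul_tmul, one_mul]

lemma can_canInv (hγ : ∀ h, can ρ (unopLeft R (γ h)) = 1 ⊗ₜ h) (Z : A ⊗[R] H) :
    can ρ (canInv γ Z) = Z := by
  induction Z using TensorProduct.induction_on with
  | zero => simp
  | tmul a h =>
    rw [canInv_tmul, can_tmul_one_mul, hγ, Algebra.TensorProduct.tmul_mul_tmul, mul_one, one_mul]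
  | add x y hx hy => rw [map_add, map_add, hx, hy]

lemma canInv_can (hρ : ∀ a, canInv γ (ρ a) = 1 ⊗ₜ a) (W : A ⊗[R] A) :
    canInv γ (can ρ W) = W := by
  induction W using TensorProduct.induction_on with
  | zero => simp
  | tmul a b =>
    rw [can_tmul, canInv_tmul_one_mul, hρ, Algebra.TensorProduct.tmul_mul_tmul, mul_one, one_mul]
  | add x y hx hy => rw [map_add, map_add, hx, hy]

end canInv

theorem can_bijective_of_adjoin_eq_top {ρ : A →ₐ[R] A ⊗[R] H} (γ : H →ₐ[R] Aᵐᵒᵖ ⊗[R] A)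
    {s : Set H} {t : Set A} (hs : Algebra.adjoin R s = ⊤) (ht : Algebra.adjoin R t = ⊤)
    (hγ : ∀ h ∈ s, can ρ (unopLeft R (γ h)) = 1 ⊗ₜ h)
    (hρ : ∀ a ∈ t, canInv γ (ρ a) = 1 ⊗ₜ a) : Function.Bijective (can ρ) :=
  Function.bijective_iff_has_inverse.mpr ⟨canInv γ,
    canInv_can (canInv_of_adjoin_eq_top ht hρ),
    can_canInv (can_unopLeft_of_adjoin_eq_top hs hγ)⟩

end HopfGalois

lemma RingQuot.adjoin_range_mkAlgHom_comp_ι {R X : Type*} [CommSemiring R]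
    (r : FreeAlgebra R X → FreeAlgebra R X → Prop) :
    Algebra.adjoin R (Set.range (RingQuot.mkAlgHom R r ∘ FreeAlgebra.ι R)) = ⊤ := by
  rw [Set.range_comp, ← AlgHom.map_adjoin, FreeAlgebra.adjoin_range_ι, Algebra.map_top,
    AlgHom.range_eq_top]
  exact RingQuot.mkAlgHom_surjective R r

namespace Ralg

variable (q : ℂ)

lemma Q_mul_t : Q q * t q = q • (t q * Q q) := by
  simpa only [map_mul, map_smul, Q, t] using RingQuot.mkAlgHom_rel ℂ (Rrel.comm (q := q))

lemma Q_mul_Qinv : Q q * Qinv q = 1 := by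
  simpa only [map_mul, map_one, Q, Qinv] using RingQuot.mkAlgHom_rel ℂ (Rrel.inv_right (q := q))

lemma Qinv_mul_Q : Qinv q * Q q = 1 := by
  simpa only [map_mul, map_one, Q, Qinv] using RingQuot.mkAlgHom_rel ℂ (Rrel.inv_left (q := q))

lemma t_mul_Qinv : t q * Qinv q = q • (Qinv q * t q) := by
  calc t q * Qinv q = Qinv q * (Q q * t q) * Qinv q := by rw [← mul_assoc, Qinv_mul_Q, one_mul]
    _ = q • (Qinv q * t q) := by
      rw [Q_mul_t, mul_smul_comm, smul_mul_assoc, mul_assoc, mul_assoc, Q_mul_Qinv, mul_one]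

end Ralg

-- The values on generators are read off from `(Q⁻¹ ⊗ 1) ρ(Q) = 1 ⊗ u`, `(Q ⊗ 1) ρ(Q⁻¹) = 1 ⊗ u⁻¹`
-- and `(Q⁻¹ ⊗ 1) ρ(t) - Q⁻¹t ⊗ 1 = 1 ⊗ v`.
noncomputable def Hq.translation (q : ℂ) : Hq q →ₐ[ℂ] (Ralg q)ᵐᵒᵖ ⊗[ℂ] Ralg q :=
  RingQuot.liftAlgHom ℂ ⟨FreeAlgebra.lift ℂ fun
    | Hgen.u => op (Ralg.Qinv q) ⊗ₜ Ralg.Q q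
    | Hgen.uinv => op (Ralg.Q q) ⊗ₜ Ralg.Qinv q
    | Hgen.v => op (Ralg.Qinv q) ⊗ₜ Ralg.t q - op (Ralg.Qinv q * Ralg.t q) ⊗ₜ 1,
   by
    -- `mul_sub` and `sub_mul` do not fire on tensor products of `RingQuot`s: the subtraction
    -- there is not reducibly the one of the ring structure.
    have mul_sub' (x y z : (Ralg q)ᵐᵒᵖ ⊗[ℂ] Ralg q) : x * (y - z) = x * y - x * z := mul_sub x y z
    have sub_mul' (x y z : (Ralg q)ᵐᵒᵖ ⊗[ℂ] Ralg q) : (y - z) * x = y * x - z * x := sub_mul y z x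
    rintro _ _ ⟨⟩ <;>
      simp only [map_mul, map_smul, map_one, FreeAlgebra.lift_ι_apply, mul_sub', sub_mul',
        smul_sub, Algebra.TensorProduct.tmul_mul_tmul, ← op_mul, mul_one, one_mul]
    · congr 1
      · rw [Ralg.Q_mul_t, tmul_smul]
      · rw [mul_assoc, Ralg.t_mul_Qinv, mul_smul_comm, op_smul, smul_tmul']
    all_goals simp only [Ralg.Q_mul_Qinv, Ralg.Qinv_mul_Q, op_one, Algebra.TensorProduct.one_def]⟩

namespace Hq

variable (q : ℂ)

@[simp]
lemma translation_u : translation q (u q) = op (Ralg.Qinv q) ⊗ₜ Ralg.Q q := by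
  rw [u, translation, RingQuot.liftAlgHom_mkAlgHom_apply, FreeAlgebra.lift_ι_apply]

@[simp]
lemma translation_uinv : translation q (uinv q) = op (Ralg.Q q) ⊗ₜ Ralg.Qinv q := by
  rw [uinv, translation, RingQuot.liftAlgHom_mkAlgHom_apply, FreeAlgebra.lift_ι_apply]

@[simp]
lemma translation_v :
    translation q (v q) = op (Ralg.Qinv q) ⊗ₜ Ralg.t q - op (Ralg.Qinv q * Ralg.t q) ⊗ₜ 1 := by
  rw [v, translation, RingQuot.liftAlgHom_mkAlgHom_apply, FreeAlgebra.lift_ι_apply]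

end Hq

open HopfGalois Algebra.TensorProduct in
lemma Hq.can_unopLeft_translation_of_mem_range_ι {q : ℂ} {ρ : Ralg q →ₐ[ℂ] Ralg q ⊗[ℂ] Hq q}
    (hρt : ρ (Ralg.t q) = Ralg.t q ⊗ₜ 1 + Ralg.Q q ⊗ₜ Hq.v q)
    (hρQ : ρ (Ralg.Q q) = Ralg.Q q ⊗ₜ Hq.u q)
    (hρQinv : ρ (Ralg.Qinv q) = Ralg.Qinv q ⊗ₜ Hq.uinv q) :
    ∀ h ∈ Set.range (RingQuot.mkAlgHom ℂ (Hrel q) ∘ FreeAlgebra.ι ℂ),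
      can ρ (unopLeft ℂ (translation q h)) = 1 ⊗ₜ h := by
  rintro _ ⟨⟨⟩, rfl⟩
  · show can ρ (unopLeft ℂ (translation q (u q))) = 1 ⊗ₜ u q
    rw [translation_u, unopLeft_tmul, unop_op, can_tmul, hρQ, tmul_mul_tmul, Ralg.Qinv_mul_Q,
      one_mul]
  · show can ρ (unopLeft ℂ (translation q (uinv q))) = 1 ⊗ₜ uinv q
    rw [translation_uinv, unopLeft_tmul, unop_op, can_tmul, hρQinv, tmul_mul_tmul,
      Ralg.Q_mul_Qinv, one_mul]
  · show can ρ (unopLeft ℂ (translation q (v q))) = 1 ⊗ₜ v q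
    rw [translation_v, map_sub, map_sub, unopLeft_tmul, unopLeft_tmul, unop_op, unop_op,
      can_tmul, can_tmul, hρt, map_one, mul_one, mul_add, tmul_mul_tmul, tmul_mul_tmul,
      Ralg.Qinv_mul_Q, mul_one, one_mul]
    abel

open HopfGalois Algebra.TensorProduct in
lemma Ralg.canInv_translation_of_mem_range_ι {q : ℂ} {ρ : Ralg q →ₐ[ℂ] Ralg q ⊗[ℂ] Hq q}
    (hρt : ρ (Ralg.t q) = Ralg.t q ⊗ₜ 1 + Ralg.Q q ⊗ₜ Hq.v q)
    (hρQ : ρ (Ralg.Q q) = Ralg.Q q ⊗ₜ Hq.u q)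
    (hρQinv : ρ (Ralg.Qinv q) = Ralg.Qinv q ⊗ₜ Hq.uinv q) :
    ∀ a ∈ Set.range (RingQuot.mkAlgHom ℂ (Rrel q) ∘ FreeAlgebra.ι ℂ),
      canInv (Hq.translation q) (ρ a) = 1 ⊗ₜ a := by
  -- `mul_sub` does not fire here, as in `Hq.translation`.
  have mul_sub' (x y z : Ralg q ⊗[ℂ] Ralg q) : x * (y - z) = x * y - x * z := mul_sub x y z
  rintro _ ⟨⟨⟩, rfl⟩
  · show canInv (Hq.translation q) (ρ (t q)) = 1 ⊗ₜ t q
    rw [hρt, map_add, canInv_tmul, canInv_tmul, map_one, unopLeft_one, mul_one, Hq.translation_v,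
      map_sub, unopLeft_tmul, unopLeft_tmul, unop_op, unop_op, mul_sub', tmul_mul_tmul,
      tmul_mul_tmul, ← mul_assoc, Ralg.Q_mul_Qinv, one_mul, one_mul]
    abel
  · show canInv (Hq.translation q) (ρ (Q q)) = 1 ⊗ₜ Q q
    rw [hρQ, canInv_tmul, Hq.translation_u, unopLeft_tmul, unop_op, tmul_mul_tmul,
      Ralg.Q_mul_Qinv, one_mul]
  · show canInv (Hq.translation q) (ρ (Qinv q)) = 1 ⊗ₜ Qinv q
    rw [hρQinv, canInv_tmul, Hq.translation_uinv, unopLeft_tmul, unop_op, tmul_mul_tmul,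
      Ralg.Qinv_mul_Q, one_mul]

open TensorProduct in
theorem Ralg_hopf_galois_general (q : ℂ)
    (ρ : Ralg q →ₐ[ℂ] (Ralg q ⊗[ℂ] Hq q))
    (hρt : ρ (Ralg.t q) = Ralg.t q ⊗ₜ 1 + Ralg.Q q ⊗ₜ Hq.v q)
    (hρQ : ρ (Ralg.Q q) = Ralg.Q q ⊗ₜ Hq.u q)
    (hρQinv : ρ (Ralg.Qinv q) = Ralg.Qinv q ⊗ₜ Hq.uinv q) :
    ∃! Φ : Ralg q ⊗[ℂ] Ralg q →ₗ[ℂ] Ralg q ⊗[ℂ] Hq q,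
      (∀ a b : Ralg q, Φ (a ⊗ₜ b) = (a ⊗ₜ (1 : Hq q)) * ρ b) ∧
      Function.Bijective Φ := by
  refine ⟨HopfGalois.can ρ, ⟨HopfGalois.can_tmul ρ, ?_⟩, fun Φ ⟨hΦ, _⟩ ↦ ext' fun a b ↦ ?_⟩
  · exact HopfGalois.can_bijective_of_adjoin_eq_top (Hq.translation q)
      (RingQuot.adjoin_range_mkAlgHom_comp_ι _) (RingQuot.adjoin_range_mkAlgHom_comp_ι _)
      (Hq.can_unopLeft_translation_of_mem_range_ι hρt hρQ hρQinv)
      (Ralg.canInv_translation_of_mem_range_ι hρt hρQ hρQinv)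
  · rw [hΦ, HopfGalois.can_tmul]

open TensorProduct in
/-- `R/ℂ` is an `𝔥_q`-Galois extension (quantum torsor): the canonical map
`Φ : R ⊗ R → R ⊗ 𝔥_q`, `Φ(a⊗b) = (a⊗1)·ρ(b)`, is bijective, where
`ρ(t) = t⊗1 + Q⊗v`, `ρ(Q) = Q⊗u`, `ρ(Q⁻¹) = Q⁻¹⊗u⁻¹`. -/
theorem Ralg_hopf_galois (q : ℂ) (hq0 : q ≠ 0)
    (ρ : Ralg q →ₐ[ℂ] (Ralg q ⊗[ℂ] Hq q))
    (hρt : ρ (Ralg.t q) = Ralg.t q ⊗ₜ 1 + Ralg.Q q ⊗ₜ Hq.v q)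
    (hρQ : ρ (Ralg.Q q) = Ralg.Q q ⊗ₜ Hq.u q)
    (hρQinv : ρ (Ralg.Qinv q) = Ralg.Qinv q ⊗ₜ Hq.uinv q) :
    ∃! Φ : Ralg q ⊗[ℂ] Ralg q →ₗ[ℂ] Ralg q ⊗[ℂ] Hq q,
      (∀ a b : Ralg q, Φ (a ⊗ₜ b) = (a ⊗ₜ (1 : Hq q)) * ρ b) ∧
      Function.Bijective Φ :=
  Ralg_hopf_galois_general q ρ hρt hρQ hρQinv
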